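/- Let C_1,...,C_k be disjoint nonempty subsets partitioning {1,...,n} with |C_1| < |C_j| for all j ≥ 2, V = span{1_{C_1},...,1_{C_k}}, and I_1 ∈ C_1. Identifying (after permuting coordinates so that I_1 is the first coordinate) vectors ṽ = (1, v), the constrained problem min ||v||_1 subject to W v = -w, where W, w encode membership ṽ ∈ V as in the orthogonal-complement formulation, has the unique solution ṽ = 1_{C_1}. -/
import Mathlib


open Matrix Classical
noncomputable section

private lemma sum_smul_dotProduct {ι m : Type*} [Fintype ι] [Fintype m]
    (g : ι → ℝ) (u : ι → m → ℝ) (x : m → ℝ) :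
    (∑ i, g i • u i) ⬝ᵥ x = ∑ i, g i * (u i ⬝ᵥ x) := by
  simp only [dotProduct, Finset.sum_apply, Pi.smul_apply, smul_eq_mul,
    Finset.sum_mul, Finset.mul_sum, mul_assoc]
  rw [Finset.sum_comm]

theorem l1_constrained_unique_solution_indicator
    (n k : ℕ) (hk : 0 < k) (hkn : k ≤ n + 1)
    (C : Fin k → Finset (Fin (n + 1)))
    (hne : ∀ i, (C i).Nonempty)
    (hdisj : ∀ i j, i ≠ j → Disjoint (C i) (C j))
    (hcover : ∀ m : Fin (n + 1), ∃ i, m ∈ C i)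
    (hsmall : ∀ j : Fin k, j ≠ ⟨0, hk⟩ → (C ⟨0, hk⟩).card < (C j).card)
    (hrep : (0 : Fin (n + 1)) ∈ C ⟨0, hk⟩)
    (V : Submodule ℝ (Fin (n + 1) → ℝ))
    (hVspan : V = Submodule.span ℝ
      (Set.range fun (i : Fin k) (m : Fin (n + 1)) =>
        if m ∈ C i then (1 : ℝ) else 0))
    (V₂ : Matrix (Fin (n + 1)) (Fin (n + 1 - k)) ℝ)
    (horth : ∀ j l : Fin (n + 1 - k),
      (fun i => V₂ i j) ⬝ᵥ (fun i => V₂ i l) = if j = l then (1 : ℝ) else 0)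
    (hperp : ∀ j : Fin (n + 1 - k), ∀ u ∈ V, (fun i => V₂ i j) ⬝ᵥ u = 0)
    (W : Matrix (Fin (n + 1 - k)) (Fin n) ℝ)
    (hW : W = Matrix.of fun r (j : Fin n) => V₂ᵀ r j.succ)
    (w : Fin (n + 1 - k) → ℝ) (hw : w = fun r => V₂ᵀ r 0) :
    W.mulVec (fun j : Fin n =>
        if (Fin.succ j) ∈ C ⟨0, hk⟩ then (1 : ℝ) else 0) = -w ∧
    ∀ v : Fin n → ℝ, W.mulVec v = -w →
      ((∑ j : Fin n, |if (Fin.succ j) ∈ C ⟨0, hk⟩ then (1 : ℝ) else 0|)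
          ≤ ∑ j : Fin n, |v j| ∧
        ((∑ j : Fin n, |v j|)
            = (∑ j : Fin n, |if (Fin.succ j) ∈ C ⟨0, hk⟩ then (1 : ℝ) else 0|) →
          Fin.cons (1 : ℝ) v
            = fun m : Fin (n + 1) => if m ∈ C ⟨0, hk⟩ then (1 : ℝ) else 0)) := by
  set t0 : Fin k := ⟨0, hk⟩ with ht0
  set e : Fin k → (Fin (n + 1) → ℝ) :=
    fun i m => if m ∈ C i then (1 : ℝ) else 0 with he
  set f : Fin (n + 1 - k) → (Fin (n + 1) → ℝ) := fun r i => V₂ i r with hf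
  -- uniqueness of covering index
  have hidx : ∀ (m : Fin (n + 1)) (i j : Fin k), m ∈ C i → m ∈ C j → i = j := by
    intro m i j hi hj
    by_contra hij
    exact Finset.disjoint_left.mp (hdisj i j hij) hi hj
  have heV : ∀ i, e i ∈ V := by
    intro i; rw [hVspan]; exact Submodule.subset_span ⟨i, rfl⟩
  have hfe : ∀ r i, f r ⬝ᵥ e i = 0 := fun r i => hperp r (e i) (heV i)
  have hcardpos : ∀ i, 0 < ((C i).card : ℝ) := by
    intro i; exact_mod_cast Finset.card_pos.mpr (hne i)
  have hee : ∀ i j, e i ⬝ᵥ e j = if i = j then ((C i).card : ℝ) else 0 := by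
    intro i j
    by_cases h : i = j
    · subst h
      simp only [if_pos rfl, dotProduct, he, ite_mul, one_mul, zero_mul,
        if_pos, Finset.sum_ite_mem, Finset.univ_inter, Finset.sum_ite_eq]
      simp [Finset.sum_ite_mem]
    · rw [if_neg h]
      apply Finset.sum_eq_zero
      intro m _
      simp only [he]
      by_cases hm : m ∈ C i
      · have : m ∉ C j := fun hm' => h (hidx m i j hm hm')
        simp [hm, this]
      · simp [hm]
  -- linear independence of the combined family
  have hli : LinearIndependent ℝ (Sum.elim e f) := by
    rw [Fintype.linearIndependent_iff]
    intro g hg i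
    have key : ∀ j : Fin k ⊕ Fin (n + 1 - k),
        ∑ i, g i * (Sum.elim e f i ⬝ᵥ Sum.elim e f j) = 0 := by
      intro j
      rw [← sum_smul_dotProduct, hg, zero_dotProduct]
    cases i with
    | inl a =>
      have := key (Sum.inl a)
      rw [Fintype.sum_sum_type] at this
      have h2 : ∀ r : Fin (n + 1 - k),
          g (Sum.inr r) * (Sum.elim e f (Sum.inr r) ⬝ᵥ Sum.elim e f (Sum.inl a)) = 0 := by
        intro r; simp [hfe r a]
      rw [Finset.sum_eq_zero (fun r _ => h2 r), add_zero] at this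
      have h3 : ∀ b : Fin k,
          g (Sum.inl b) * (Sum.elim e f (Sum.inl b) ⬝ᵥ Sum.elim e f (Sum.inl a))
            = if b = a then g (Sum.inl b) * ((C b).card : ℝ) else 0 := by
        intro b
        simp only [Sum.elim_inl, hee b a]
        by_cases hba : b = a <;> simp [hba]
      rw [Finset.sum_congr rfl (fun b _ => h3 b), Finset.sum_ite_eq' Finset.univ a] at this
      simp only [Finset.mem_univ, if_pos] at this
      rcases mul_eq_zero.mp this with h | h
      · exact h
      · exact absurd h (ne_of_gt (hcardpos a))
    | inr r =>
      have := key (Sum.inr r)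
      rw [Fintype.sum_sum_type] at this
      have h2 : ∀ b : Fin k,
          g (Sum.inl b) * (Sum.elim e f (Sum.inl b) ⬝ᵥ Sum.elim e f (Sum.inr r)) = 0 := by
        intro b
        have : e b ⬝ᵥ f r = 0 := by rw [dotProduct_comm]; exact hfe r b
        simp [this]
      rw [Finset.sum_eq_zero (fun b _ => h2 b), zero_add] at this
      have h3 : ∀ s : Fin (n + 1 - k),
          g (Sum.inr s) * (Sum.elim e f (Sum.inr s) ⬝ᵥ Sum.elim e f (Sum.inr r))
            = if s = r then g (Sum.inr s) else 0 := by
        intro s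
        have : f s ⬝ᵥ f r = if s = r then (1 : ℝ) else 0 := horth s r
        simp only [Sum.elim_inr, this]
        by_cases hsr : s = r <;> simp [hsr]
      rw [Finset.sum_congr rfl (fun s _ => h3 s), Finset.sum_ite_eq' Finset.univ r] at this
      simpa using this
  have hcard : Fintype.card (Fin k ⊕ Fin (n + 1 - k)) = Module.finrank ℝ (Fin (n + 1) → ℝ) := by
    simp [Module.finrank_pi]
    omega
  have htop : Submodule.span ℝ (Set.range (Sum.elim e f)) = ⊤ := by
    have : Nonempty (Fin k ⊕ Fin (n + 1 - k)) := ⟨Sum.inl t0⟩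
    exact hli.span_eq_top_of_card_eq_finrank hcard
  -- key: u ⊥ all columns of V₂ implies u ∈ V
  have hmemV : ∀ u : Fin (n + 1) → ℝ, (∀ r, f r ⬝ᵥ u = 0) → u ∈ V := by
    intro u hu
    have : u ∈ Submodule.span ℝ (Set.range e) ⊔ Submodule.span ℝ (Set.range f) := by
      rw [← Submodule.span_union, ← Set.Sum.elim_range, htop]; trivial
    obtain ⟨s, hs, t, ht, hst⟩ := Submodule.mem_sup.mp this
    have hsV : s ∈ V := by rw [hVspan]; exact hs
    have hft : ∀ r, f r ⬝ᵥ t = 0 := by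
      intro r
      have : f r ⬝ᵥ (s + t) = 0 := by rw [hst]; exact hu r
      rw [dotProduct_add, hperp r s hsV, zero_add] at this
      exact this
    obtain ⟨a, hat⟩ := Submodule.mem_span_range_iff_exists_fun ℝ |>.mp ht
    have ht0 : t ⬝ᵥ t = 0 := by
      rw [← hat, sum_smul_dotProduct]
      apply Finset.sum_eq_zero
      intro r _
      rw [hat, hft r, mul_zero]
    have : t = 0 := dotProduct_self_eq_zero.mp ht0
    rw [← hst, this, add_zero]
    exact hsV
  -- constraint equivalence
  have hconstr : ∀ v : Fin n → ℝ, W.mulVec v = -w ↔ ∀ r, f r ⬝ᵥ Fin.cons 1 v = 0 := by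
    intro v
    have hdot : ∀ r, f r ⬝ᵥ Fin.cons 1 v = w r + W.mulVec v r := by
      intro r
      rw [hW, hw]
      simp only [dotProduct, Matrix.mulVec, dotProduct, Matrix.of_apply,
        Matrix.transpose_apply, hf]
      rw [Fin.sum_univ_succ]
      simp [Fin.cons_zero, Fin.cons_succ]
    constructor
    · intro h r
      rw [hdot r, h]
      simp
    · intro h
      funext r
      have := h r
      rw [hdot r] at this
      have : W.mulVec v r = -w r := by linarith
      simpa using this
    -- feasible vectors: coefficients
  have hfeas : ∀ v : Fin n → ℝ, W.mulVec v = -w →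
      ∃ c : Fin k → ℝ, c t0 = 1 ∧
        ∀ (m : Fin (n + 1)) (i : Fin k), m ∈ C i → (Fin.cons (1:ℝ) v : Fin (n + 1) → ℝ) m = c i := by
    intro v hv
    have hmem : (Fin.cons (1:ℝ) v : Fin (n + 1) → ℝ) ∈ V := hmemV _ ((hconstr v).mp hv)
    rw [hVspan] at hmem
    obtain ⟨c, hc⟩ := Submodule.mem_span_range_iff_exists_fun ℝ |>.mp hmem
    have hval : ∀ (m : Fin (n + 1)) (i : Fin k), m ∈ C i → (Fin.cons (1:ℝ) v : Fin (n + 1) → ℝ) m = c i := by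
      intro m i hi
      rw [← hc]
      rw [Finset.sum_apply]
      rw [Finset.sum_eq_single i]
      · simp [he, hi]
      · intro j _ hj
        have : m ∉ C j := fun hm => hj (hidx m j i hm hi)
        simp [he, this]
      · intro h; simp at h
    refine ⟨c, ?_, hval⟩
    have := hval 0 t0 hrep
    simpa using this.symm
  -- sum over partition
  have huniv : (Finset.univ : Finset (Fin (n + 1))) = Finset.univ.biUnion C := by
    ext m
    simp only [Finset.mem_univ, Finset.mem_biUnion, true_iff]
    obtain ⟨i, hi⟩ := hcover m
    exact ⟨i, trivial, hi⟩
  have hpd : (↑(Finset.univ : Finset (Fin k)) : Set (Fin k)).PairwiseDisjoint C := by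
    intro i _ j _ hij
    exact hdisj i j hij
  have hsum_abs : ∀ u : Fin (n + 1) → ℝ, ∀ c : Fin k → ℝ,
      (∀ (m : Fin (n + 1)) (i : Fin k), m ∈ C i → u m = c i) →
      ∑ m, |u m| = ∑ i, ((C i).card : ℝ) * |c i| := by
    intro u c hc
    rw [huniv, Finset.sum_biUnion hpd]
    apply Finset.sum_congr rfl
    intro i _
    rw [Finset.sum_congr rfl (fun m hm => by rw [hc m i hm])]
    simp [mul_comm]
  -- the target value
  have htarget : (∑ j : Fin n, |if (Fin.succ j) ∈ C t0 then (1:ℝ) else 0|)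
      = ((C t0).card : ℝ) - 1 := by
    have h1 : ∑ m : Fin (n + 1), |e t0 m| = ((C t0).card : ℝ) := by
      rw [hsum_abs (e t0) (fun i => if i = t0 then (1:ℝ) else 0)
        (fun m i hmi => by
          simp only [he]
          by_cases hit : i = t0
          · subst hit; simp [hmi]
          · have : m ∉ C t0 := fun hm => hit (hidx m i t0 hmi hm)
            simp [this, hit])]
      rw [Finset.sum_eq_single t0]
      · simp
      · intro j _ hj; simp [hj]
      · intro h; simp at h
    have h2 : ∑ m : Fin (n + 1), |e t0 m|
        = |e t0 0| + ∑ j : Fin n, |e t0 j.succ| := Fin.sum_univ_succ _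
    have h3 : |e t0 0| = 1 := by simp [he, hrep]
    have h4 : ∀ j : Fin n, |e t0 j.succ| = |if (Fin.succ j) ∈ C t0 then (1:ℝ) else 0| := by
      intro j; rfl
    rw [Finset.sum_congr rfl (fun j _ => (h4 j).symm)]
    rw [h2, h3] at h1
    linarith
  -- main inequality machinery bundled
  have hmain : ∀ v : Fin n → ℝ, W.mulVec v = -w →
      ∃ c : Fin k → ℝ, c t0 = 1 ∧
        (∀ (m : Fin (n + 1)) (i : Fin k), m ∈ C i → (Fin.cons (1:ℝ) v : Fin (n + 1) → ℝ) m = c i) ∧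
        ∑ j : Fin n, |v j| = (∑ i, ((C i).card : ℝ) * |c i|) - 1 := by
    intro v hv
    obtain ⟨c, hc1, hcv⟩ := hfeas v hv
    refine ⟨c, hc1, hcv, ?_⟩
    have h1 : ∑ m, |(Fin.cons (1:ℝ) v : Fin (n + 1) → ℝ) m| = ∑ i, ((C i).card : ℝ) * |c i| :=
      hsum_abs _ c hcv
    have h2 : ∑ m, |(Fin.cons (1:ℝ) v : Fin (n + 1) → ℝ) m|
        = |(Fin.cons (1:ℝ) v : Fin (n + 1) → ℝ) 0| + ∑ j : Fin n, |(Fin.cons (1:ℝ) v : Fin (n + 1) → ℝ) j.succ| :=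
      Fin.sum_univ_succ _
    simp only [Fin.cons_zero, Fin.cons_succ, abs_one] at h2
    rw [h2] at h1
    linarith
  constructor
  · -- feasibility of the indicator
    rw [hconstr]
    intro r
    have : (Fin.cons (1:ℝ) (fun j : Fin n => if (Fin.succ j) ∈ C t0 then (1:ℝ) else 0) : Fin (n + 1) → ℝ)
        = e t0 := by
      funext m
      induction m using Fin.cases with
      | zero => simp [he, hrep]
      | succ j => rfl
    rw [this]
    exact hperp r (e t0) (heV t0)
  · intro v hv
    obtain ⟨c, hc1, hcv, hsum⟩ := hmain v hv
    have hterm_nonneg : ∀ i : Fin k, i ∈ Finset.univ → 0 ≤ ((C i).card : ℝ) * |c i| :=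
      fun i _ => mul_nonneg (le_of_lt (hcardpos i)) (abs_nonneg _)
    have hle : ((C t0).card : ℝ) * |c t0| ≤ ∑ i, ((C i).card : ℝ) * |c i| :=
      Finset.single_le_sum hterm_nonneg (Finset.mem_univ t0)
    rw [hc1] at hle
    simp only [abs_one, mul_one] at hle
    constructor
    · rw [htarget, hsum]; linarith
    · intro heq
      rw [htarget, hsum] at heq
      have hsumeq : ∑ i, ((C i).card : ℝ) * |c i| = ((C t0).card : ℝ) := by linarith
      have hrest : ∑ i ∈ Finset.univ.erase t0, ((C i).card : ℝ) * |c i| = 0 := by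
        have h5 := Finset.sum_erase_add Finset.univ
          (fun i => ((C i).card : ℝ) * |c i|) (Finset.mem_univ t0)
        simp only [hc1, abs_one, mul_one] at h5
        rw [hsumeq] at h5
        linarith
      have hzero : ∀ i : Fin k, i ≠ t0 → c i = 0 := by
        intro i hi
        have := (Finset.sum_eq_zero_iff_of_nonneg
          (fun j _ => hterm_nonneg j (Finset.mem_univ j))).mp hrest i
          (Finset.mem_erase.mpr ⟨hi, Finset.mem_univ i⟩)
        rcases mul_eq_zero.mp this with h | h
        · exact absurd h (ne_of_gt (hcardpos i))
        · exact abs_eq_zero.mp h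
      funext m
      obtain ⟨i, hi⟩ := hcover m
      rw [hcv m i hi]
      by_cases hit : i = t0
      · subst hit
        simp [hi, hc1]
      · have : m ∉ C t0 := fun hm => hit (hidx m i t0 hi hm)
        simp [this, hzero i hit]
end
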